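/- Let a, b, S, A, B > 0 satisfy a S ((A+B)/2)^{1/3} ≤ A/2, b S² ((A+B)/2)^{2/3} ≤ B/2, and set c = A/3 + B/12. Then c ≥ (a b S³)/2 + (b³ S⁶)/12 + (2/3)(b² S⁴/4 + a S)^{3/2}. -/
import Mathlib


set_option maxHeartbeats 1000000 in
theorem stmt_8 (a b S A B c : ℝ) (ha : 0 < a) (hb : 0 < b) (hS : 0 < S)
    (hA : 0 < A) (hB : 0 < B)
    (h₁ : a * S * ((A + B) / 2) ^ ((1 : ℝ) / 3) ≤ A / 2)
    (h₂ : b * S^2 * ((A + B) / 2) ^ ((2 : ℝ) / 3) ≤ B / 2)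
    (hc : c = A / 3 + B / 12) :
    c ≥ a * b * S^3 / 2 + b^3 * S^6 / 12 +
      (2 / 3) * (b^2 * S^4 / 4 + a * S) ^ ((3 : ℝ) / 2) := by
  have hPpos : (0:ℝ) < (A + B) / 2 := by positivity
  set t := ((A + B) / 2) ^ ((1 : ℝ) / 3) with htdef
  have htpos : 0 < t := Real.rpow_pos_of_pos hPpos _
  have ht3 : t ^ 3 = (A + B) / 2 := by
    rw [htdef, ← Real.rpow_natCast (((A + B) / 2) ^ ((1 : ℝ) / 3)) 3,
      ← Real.rpow_mul hPpos.le]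
    norm_num
  have ht2 : ((A + B) / 2) ^ ((2 : ℝ) / 3) = t ^ 2 := by
    rw [htdef, ← Real.rpow_natCast (((A + B) / 2) ^ ((1 : ℝ) / 3)) 2,
      ← Real.rpow_mul hPpos.le]
    norm_num
  rw [ht2] at h₂
  clear_value t
  have hqpos : (0:ℝ) < b ^ 2 * S ^ 4 / 4 + a * S := by positivity
  set r := Real.sqrt (b ^ 2 * S ^ 4 / 4 + a * S) with hrdef
  have hr2 : r ^ 2 = b ^ 2 * S ^ 4 / 4 + a * S := Real.sq_sqrt hqpos.le
  have hrpos : 0 < r := Real.sqrt_pos.mpr hqpos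
  have hq32 : (b ^ 2 * S ^ 4 / 4 + a * S) ^ ((3 : ℝ) / 2) = r ^ 3 := by
    rw [hrdef, Real.sqrt_eq_rpow,
      ← Real.rpow_natCast ((b ^ 2 * S ^ 4 / 4 + a * S) ^ ((1 : ℝ) / 2)) 3,
      ← Real.rpow_mul hqpos.le]
    norm_num
  clear_value r
  have hsum : a * S * t + b * S ^ 2 * t ^ 2 ≤ t ^ 3 := by
    rw [ht3]
    have : b * S ^ 2 * t ^ 2 ≤ B / 2 := h₂
    linarith
  have hkey : a * S + b * S ^ 2 * t ≤ t ^ 2 := by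
    nlinarith [htpos, hsum]
  have hrb : b * S ^ 2 / 2 < r := by
    nlinarith [hr2, hrpos, mul_pos ha hS, mul_pos hb (pow_pos hS 2)]
  have hfac : 0 ≤ (t - b * S ^ 2 / 2 - r) * (t - b * S ^ 2 / 2 + r) := by
    nlinarith [hkey, hr2]
  have hpos2 : 0 < t - b * S ^ 2 / 2 + r := by linarith
  have htm : b * S ^ 2 / 2 + r ≤ t := by
    nlinarith [hfac, hpos2]
  have hmpos : (0:ℝ) < b * S ^ 2 / 2 + r := by positivity
  have hcub : (b * S ^ 2 / 2 + r) ^ 3 ≤ t ^ 3 := by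
    exact pow_le_pow_left₀ hmpos.le htm 3
  have hct : c ≥ t ^ 3 / 6 + a * S * t / 2 := by
    rw [hc]
    have hAB : A + B = 2 * t ^ 3 := by rw [ht3]; ring
    linarith
  have hfm : t ^ 3 / 6 + a * S * t / 2 ≥ (b * S ^ 2 / 2 + r) ^ 3 / 6
      + a * S * (b * S ^ 2 / 2 + r) / 2 := by
    have := mul_le_mul_of_nonneg_left htm (by positivity : (0:ℝ) ≤ a * S)
    linarith
  have heq : (b * S ^ 2 / 2 + r) ^ 3 / 6 + a * S * (b * S ^ 2 / 2 + r) / 2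
      = a * b * S ^ 3 / 2 + b ^ 3 * S ^ 6 / 12 + 2 / 3 * r ^ 3 := by
    linear_combination (b * S ^ 2 / 4 - r / 2) * hr2
  rw [hq32]
  linarith
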